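/- Let μ be a Borel probability measure on [0,1]^d with cumulative distribution function H such that H(1,…,1,x,1,…,1) = x for every x ∈ [0,1] and every coordinate position (uniform margins). Let w = (w₁,…,w_d) ∈ (0,1]^d satisfy w₁ + ⋯ + w_d = 1, and suppose there is a real number a > 0 such that H(x^{w₁},…,x^{w_d}) = x^a for all x ∈ (0,1). Then ∫_{[0,1]^d} ν_w(u) dμ(u) = a/(1+a) − c(w). -/

import Mathlib

open MeasureTheory Finset

/-- The multivariate `w`-madogram integrand
`ν_w(u) = max_i uᵢ^(1/wᵢ) − (1/d) Σᵢ uᵢ^(1/wᵢ)`. -/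
noncomputable def nuW (d : ℕ) (hd : 0 < d) (w u : Fin d → ℝ) : ℝ :=
  (Finset.univ.sup' (Finset.univ_nonempty_iff.mpr (Fin.pos_iff_nonempty.mp hd))
      fun i => u i ^ (1 / w i)) -
    (1 / (d : ℝ)) * ∑ i, u i ^ (1 / w i)

/-- Cumulative distribution function of a measure on `[0,1]^d ⊆ ℝ^d`. -/
noncomputable def cdf {d : ℕ} (μ : Measure (Fin d → ℝ)) (u : Fin d → ℝ) : ℝ :=
  (μ {v | ∀ i, v i ≤ u i}).toReal

/-!
On the unit cube, `max_i uᵢ^(1/wᵢ) ≤ t` iff `uᵢ ≤ t^(wᵢ)` for all `i`, so the diagonal condition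
says that `max_i uᵢ^(1/wᵢ)` has distribution function `t ↦ t^a` on `(0,1)`; likewise a uniform
margin says that `uᵢ^(1/wᵢ)` has distribution function `t ↦ t^(wᵢ)`. A `[0,1]`-valued random
variable with distribution function `t^p` has mean `∫₀¹ (1 - t^p) dt = p/(1+p)` by the layer-cake
formula, and the madogram follows by linearity of the integral.
-/

open Set

theorem Finset.measurable_sup'_apply {ι δ α : Type*} [MeasurableSpace δ] [MeasurableSpace α]
    [SemilatticeSup α] [MeasurableSup₂ α] {s : Finset ι} (hs : s.Nonempty) {f : ι → δ → α}
    (hf : ∀ i ∈ s, Measurable (f i)) : Measurable fun x => s.sup' hs fun i => f i x := by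
  simpa only [← Finset.sup'_apply] using Finset.measurable_sup' hs hf

theorem Real.rpow_mem_Icc_zero_one {x y : ℝ} (hx : x ∈ Icc (0 : ℝ) 1) (hy : 0 ≤ y) :
    x ^ y ∈ Icc (0 : ℝ) 1 :=
  ⟨Real.rpow_nonneg hx.1 y, Real.rpow_le_one hx.1 hx.2 hy⟩

theorem Real.rpow_one_div_le_iff {x y z : ℝ} (hx : 0 ≤ x) (hy : 0 ≤ y) (hz : 0 < z) :
    x ^ (1 / z) ≤ y ↔ x ≤ y ^ z := by
  rw [one_div]
  exact Real.rpow_inv_le_iff_of_pos hx hy hz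

theorem integral_eq_div_of_measureReal_le_eq_rpow {α : Type*} [MeasurableSpace α]
    {μ : Measure α} [IsProbabilityMeasure μ] {f : α → ℝ} (hf : AEMeasurable f μ)
    (hf01 : ∀ᵐ x ∂μ, f x ∈ Icc (0 : ℝ) 1) {p : ℝ} (hp : -1 < p)
    (hdist : ∀ t ∈ Ioo (0 : ℝ) 1, μ.real {x | f x ≤ t} = t ^ p) :
    ∫ x, f x ∂μ = p / (1 + p) := by
  have htail_of_one_le : ∀ t, 1 ≤ t → μ.real {x | t < f x} = 0 := fun t ht => by
    rw [measureReal_eq_zero_iff]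
    simpa only [not_not] using ae_iff.mp <| hf01.mono fun x hx => not_lt.mpr (hx.2.trans ht)
  have htail : ∀ t ∈ Ioc (0 : ℝ) 1, μ.real {x | t < f x} = 1 - t ^ p := by
    rintro t ⟨ht0, ht1⟩
    rcases ht1.lt_or_eq with ht1 | rfl
    · rw [← hdist t ⟨ht0, ht1⟩, ← probReal_compl_eq_one_sub₀ (s := {x | f x ≤ t})
        (hf.nullMeasurable measurableSet_Iic)]
      simp only [compl_ofPred, not_le]
    · rw [Real.one_rpow, sub_self, htail_of_one_le 1 le_rfl]
  have hp1 : 0 < 1 + p := by linarith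
  calc ∫ x, f x ∂μ = ∫ t in Ioi 0, μ.real {x | t < f x} :=
        (Integrable.of_mem_Icc 0 1 hf hf01).integral_eq_integral_meas_lt
          (hf01.mono fun x hx => hx.1)
    _ = ∫ t in Ioc 0 1, μ.real {x | t < f x} :=
        (setIntegral_eq_of_subset_of_forall_sdiff_eq_zero measurableSet_Ioi Ioc_subset_Ioi_self
          fun t ht => htail_of_one_le t (not_le.mp fun h => ht.2 ⟨ht.1, h⟩).le)
    _ = ∫ t in (0 : ℝ)..1, (1 - t ^ p) := by
        rw [intervalIntegral.integral_of_le zero_le_one]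
        exact setIntegral_congr_fun measurableSet_Ioc htail
    _ = p / (1 + p) := by
        rw [intervalIntegral.integral_sub intervalIntegrable_const
          (intervalIntegral.intervalIntegrable_rpow' hp), integral_rpow (Or.inl hp),
          Real.one_rpow, add_comm p 1, Real.zero_rpow hp1.ne', integral_one]
        field_simp
        ring

theorem sup'_rpow_one_div_mem_Icc {d : ℕ} (hne : (univ : Finset (Fin d)).Nonempty)
    {u w : Fin d → ℝ} (hu : ∀ j, u j ∈ Icc (0 : ℝ) 1) (hw : ∀ i, 0 ≤ w i) :
    univ.sup' hne (fun i => u i ^ (1 / w i)) ∈ Icc (0 : ℝ) 1 := by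
  obtain ⟨i, -, hi⟩ := exists_mem_eq_sup' hne fun i => u i ^ (1 / w i)
  exact hi ▸ Real.rpow_mem_Icc_zero_one (hu i) (one_div_nonneg.mpr (hw i))

theorem measureReal_eq_cdf_of_ae_iff {d : ℕ} {μ : Measure (Fin d → ℝ)} {s : Set (Fin d → ℝ)}
    {x : Fin d → ℝ} (h : ∀ᵐ u ∂μ, u ∈ s ↔ ∀ i, u i ≤ x i) : μ.real s = cdf μ x :=
  congrArg ENNReal.toReal (measure_congr (Filter.eventuallyEq_set.mpr h))

section UnitCube

variable {d : ℕ} {μ : Measure (Fin d → ℝ)} [IsProbabilityMeasure μ] {w : Fin d → ℝ}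

theorem integral_rpow_one_div_of_cdf_update (hcube : ∀ᵐ u ∂μ, ∀ j, u j ∈ Icc (0 : ℝ) 1)
    {i : Fin d} (hwi : 0 < w i)
    (hmarg : ∀ x ∈ Icc (0 : ℝ) 1, cdf μ (Function.update (fun _ => (1 : ℝ)) i x) = x) :
    ∫ u, u i ^ (1 / w i) ∂μ = w i / (1 + w i) := by
  refine integral_eq_div_of_measureReal_le_eq_rpow
    ((measurable_pi_apply i).pow_const _).aemeasurable
    (hcube.mono fun u hu => Real.rpow_mem_Icc_zero_one (hu i) (one_div_nonneg.mpr hwi.le))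
    (by linarith) fun t ht => ?_
  rw [← hmarg (t ^ w i) (Real.rpow_mem_Icc_zero_one ⟨ht.1.le, ht.2.le⟩ hwi.le)]
  refine measureReal_eq_cdf_of_ae_iff ?_
  filter_upwards [hcube] with u hu
  simp only [Function.forall_update_iff _ fun j y => u j ≤ y,
    Real.rpow_one_div_le_iff (hu i).1 ht.1.le hwi]
  exact (and_iff_left fun j _ => (hu j).2).symm

theorem integral_sup'_rpow_one_div_of_cdf (hcube : ∀ᵐ u ∂μ, ∀ j, u j ∈ Icc (0 : ℝ) 1)
    (hne : (univ : Finset (Fin d)).Nonempty) (hw : ∀ i, 0 < w i) {a : ℝ} (ha : -1 < a)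
    (hdiag : ∀ x ∈ Ioo (0 : ℝ) 1, cdf μ (fun i => x ^ w i) = x ^ a) :
    ∫ u, univ.sup' hne (fun i => u i ^ (1 / w i)) ∂μ = a / (1 + a) := by
  refine integral_eq_div_of_measureReal_le_eq_rpow
    (Finset.measurable_sup'_apply hne fun i _ => by fun_prop).aemeasurable
    (hcube.mono fun u hu => sup'_rpow_one_div_mem_Icc hne hu fun i => (hw i).le) ha fun t ht => ?_
  rw [← hdiag t ht]
  refine measureReal_eq_cdf_of_ae_iff ?_
  filter_upwards [hcube] with u hu
  simp only [sup'_le_iff, Finset.mem_univ, forall_const,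
    Real.rpow_one_div_le_iff (hu _).1 ht.1.le (hw _)]

end UnitCube

theorem madogram_value (d : ℕ) (hd : 2 ≤ d)
    (μ : Measure (Fin d → ℝ)) [IsProbabilityMeasure μ]
    (hμ : μ (Set.univ.pi fun _ : Fin d => Set.Icc (0:ℝ) 1)ᶜ = 0)
    (hmarg : ∀ i : Fin d, ∀ x ∈ Set.Icc (0:ℝ) 1,
      cdf μ (Function.update (fun _ => (1:ℝ)) i x) = x)
    (w : Fin d → ℝ) (hw : ∀ i, 0 < w i ∧ w i ≤ 1)
    (a : ℝ) (ha : 0 < a)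
    (hdiag : ∀ x ∈ Set.Ioo (0:ℝ) 1, cdf μ (fun i => x ^ w i) = x ^ a) :
    ∫ u, nuW d (by omega) w u ∂μ =
      a / (1 + a) - (1 / (d : ℝ)) * ∑ i, w i / (1 + w i) := by
  have hcube : ∀ᵐ u ∂μ, ∀ i, u i ∈ Icc (0 : ℝ) 1 := by
    filter_upwards [mem_ae_iff.mpr hμ] with u hu i using hu i (mem_univ i)
  have hne : (univ : Finset (Fin d)).Nonempty := univ_nonempty_iff.mpr ⟨⟨0, by omega⟩⟩
  have hw0 : ∀ i, 0 ≤ w i := fun i => (hw i).1.le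
  have hcoord : ∀ i, Integrable (fun u => u i ^ (1 / w i)) μ := fun i =>
    .of_mem_Icc 0 1 ((measurable_pi_apply i).pow_const _).aemeasurable
      (hcube.mono fun u hu => Real.rpow_mem_Icc_zero_one (hu i) (one_div_nonneg.mpr (hw0 i)))
  have hmax : Integrable (fun u => univ.sup' hne fun i => u i ^ (1 / w i)) μ :=
    .of_mem_Icc 0 1 (Finset.measurable_sup'_apply hne fun i _ => by fun_prop).aemeasurable
      (hcube.mono fun u hu => sup'_rpow_one_div_mem_Icc hne hu hw0)
  unfold nuW
  rw [integral_sub hmax ((integrable_finsetSum _ fun i _ => hcoord i).const_mul _),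
    integral_const_mul, integral_finsetSum _ fun i _ => hcoord i,
    integral_sup'_rpow_one_div_of_cdf hcube hne (fun i => (hw i).1) (by linarith) hdiag]
  congr 2
  exact sum_congr rfl fun i _ => integral_rpow_one_div_of_cdf_update hcube (hw i).1 (hmarg i)
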